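/- arXiv:2110.03045 — 5 statements merged into one kernel-verified Lean document; each statement's English description precedes it below -/
import Mathlib

section
/- For the scalar 3DVAR iteration, for every n ≥ 1 the mean squared error satisfies E[(u_n − u†)²] ≥ γ²K². In particular, scalar 3DVAR without iterate averaging cannot converge in mean square for any fixed choice of the regularization parameter α. -/
/-!
The error `eₙ = uₙ − u†` obeys `eₙ = K ηₙ + (1 − K A) eₙ₋₁`, and `eₙ₋₁` is a function of
`η₁, …, ηₙ₋₁` only, hence independent of `ηₙ`. Therefore
`E[eₙ²] ≥ Var eₙ = K² Var ηₙ + (1 − K A)² Var eₙ₋₁ ≥ K² γ²`.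
-/

open MeasureTheory ProbabilityTheory

section Recursion

variable {Ω β γ : Type*} {mΩ : MeasurableSpace Ω} [mβ : MeasurableSpace β] [MeasurableSpace γ]

theorem measurable_iSup_comap_of_succ_eq {η : ℕ → Ω → β} {u : ℕ → Ω → γ} {f : ℕ → β → γ → γ}
    (hf : ∀ n, Measurable (Function.uncurry (f n))) {c : γ} (hu0 : u 0 = fun _ => c)
    (hu : ∀ n, u (n + 1) = fun ω => f n (η (n + 1) ω) (u n ω)) (n : ℕ) :
    Measurable[⨆ i ∈ Set.Iic n, mβ.comap (η i)] (u n) := by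
  induction n with
  | zero => rw [hu0]; exact measurable_const
  | succ n ih =>
    have hη : Measurable[⨆ i ∈ Set.Iic (n + 1), mβ.comap (η i)] (η (n + 1)) :=
      measurable_iff_comap_le.2 (le_iSup₂ (f := fun i (_ : i ∈ Set.Iic (n + 1)) => mβ.comap (η i))
        (n + 1) (Set.mem_Iic.2 le_rfl))
    have hmono : (⨆ i ∈ Set.Iic n, mβ.comap (η i)) ≤ ⨆ i ∈ Set.Iic (n + 1), mβ.comap (η i) :=
      biSup_mono fun i hi => Set.mem_Iic.2 (Nat.le_succ_of_le hi)
    rw [hu n]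
    exact (hf n).comp (hη.prodMk (ih.mono hmono le_rfl))

end Recursion

namespace ProbabilityTheory

variable {Ω : Type*} {mΩ : MeasurableSpace Ω} {μ : Measure Ω}

theorem iIndepFun.indepFun_of_measurable_iSup {ι β γ : Type*} [mβ : MeasurableSpace β]
    [MeasurableSpace γ] {η : ι → Ω → β} (h : iIndepFun η μ) (hη : ∀ i, Measurable (η i))
    {S : Set ι} {j : ι} (hj : j ∉ S) {X : Ω → γ} (hX : Measurable[⨆ i ∈ S, mβ.comap (η i)] X) :
    η j ⟂ᵢ[μ] X := by
  have hindep := indep_iSup_of_disjoint (fun i => (hη i).comap_le) h.iIndep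
    (Set.disjoint_singleton_left.2 hj)
  rw [IndepFun_iff_Indep]
  refine indep_of_indep_of_le_right (indep_of_indep_of_le_left hindep ?_) hX.comap_le
  exact le_iSup₂ (f := fun i (_ : i ∈ ({j} : Set ι)) => mβ.comap (η i)) j rfl

theorem IndepFun.sq_mul_variance_le_integral_sq [IsProbabilityMeasure μ] {X Y : Ω → ℝ}
    (hX : MemLp X 2 μ) (hY : MemLp Y 2 μ) (h : X ⟂ᵢ[μ] Y) (c : ℝ) :
    c ^ 2 * Var[X; μ] ≤ ∫ ω, (c * X ω + Y ω) ^ 2 ∂μ := by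
  have hcX : (fun ω => c * X ω) ⟂ᵢ[μ] Y := h.comp (measurable_const_mul c) measurable_id
  calc c ^ 2 * Var[X; μ] ≤ Var[fun ω => c * X ω; μ] + Var[Y; μ] := by
        rw [← variance_const_mul]
        exact le_add_of_nonneg_right (variance_nonneg _ _)
    _ = Var[fun ω => c * X ω + Y ω; μ] := (hcX.variance_fun_add (hX.const_mul c) hY).symm
    _ ≤ ∫ ω, (c * X ω + Y ω) ^ 2 ∂μ :=
        variance_le_expectation_sq ((hX.const_mul c).add hY).aestronglyMeasurable

theorem HasLaw.memLp_two_of_gaussianReal {X : Ω → ℝ} {m : ℝ} {v : NNReal}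
    (hX : HasLaw X (gaussianReal m v) μ) : MemLp X 2 μ := by
  have hid : MemLp id 2 (μ.map X) := hX.map_eq ▸ memLp_id_gaussianReal 2
  exact (memLp_map_measure_iff aestronglyMeasurable_id hX.aemeasurable).1 hid

end ProbabilityTheory

theorem scalar_3dvar_no_convergence_general
    {Ω : Type*} [MeasurableSpace Ω] (μ : Measure Ω) [IsProbabilityMeasure μ]
    (A γ udag u0 : ℝ)
    (η : ℕ → Ω → ℝ) (hmeas : ∀ n, Measurable (η n))
    (hindep : iIndepFun η μ)
    (hgauss : ∀ n, 1 ≤ n → Measure.map (η n) μ = gaussianReal 0 (Real.toNNReal (γ ^ 2)))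
    (y : ℕ → Ω → ℝ) (hy : ∀ n, 1 ≤ n → y n = fun ω => A * udag + η n ω)
    (K : ℝ)
    (u : ℕ → Ω → ℝ) (hu0 : u 0 = fun _ => u0)
    (hu : ∀ n : ℕ, u (n + 1) = fun ω => K * y (n + 1) ω + (1 - K * A) * u n ω) :
    ∀ n : ℕ, 1 ≤ n → γ ^ 2 * K ^ 2 ≤ ∫ ω, (u n ω - udag) ^ 2 ∂μ := by
  intro n hn
  obtain ⟨m, rfl⟩ := Nat.exists_eq_add_of_le' hn
  have hlaw (k : ℕ) : HasLaw (η (k + 1)) (gaussianReal 0 (γ ^ 2).toNNReal) μ :=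
    ⟨(hmeas _).aemeasurable, hgauss _ (by omega)⟩
  have hstep (k : ℕ) :
      u (k + 1) = fun ω => K * (A * udag + η (k + 1) ω) + (1 - K * A) * u k ω := by
    rw [hu k, hy (k + 1) (by omega)]
  have hL2 (k : ℕ) : MemLp (u k) 2 μ := by
    induction k with
    | zero => rw [hu0]; exact memLp_const u0
    | succ k ih =>
      rw [hstep k]
      exact (((memLp_const (A * udag)).add (hlaw k).memLp_two_of_gaussianReal).const_mul K).add
        (ih.const_mul _)
  have hadapted := measurable_iSup_comap_of_succ_eq
    (f := fun _ x z => K * (A * udag + x) + (1 - K * A) * z) (fun _ => by fun_prop) hu0 hstep m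
  have hindep_err : η (m + 1) ⟂ᵢ[μ] fun ω => (1 - K * A) * (u m ω - udag) :=
    (hindep.indepFun_of_measurable_iSup hmeas (by simp) hadapted).comp (φ := id)
      (ψ := fun z => (1 - K * A) * (z - udag)) measurable_id (by fun_prop)
  calc γ ^ 2 * K ^ 2 = K ^ 2 * Var[η (m + 1); μ] := by
        rw [(hlaw m).variance_eq, variance_id_gaussianReal, Real.coe_toNNReal _ (sq_nonneg γ),
          mul_comm]
    _ ≤ ∫ ω, (K * η (m + 1) ω + (1 - K * A) * (u m ω - udag)) ^ 2 ∂μ :=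
        hindep_err.sq_mul_variance_le_integral_sq (hlaw m).memLp_two_of_gaussianReal
          (((hL2 m).sub (memLp_const _)).const_mul _) K
    _ = ∫ ω, (u (m + 1) ω - udag) ^ 2 ∂μ := by
        congr 1; funext ω; rw [hstep m]; ring

/-- Scalar 3DVAR without iterate averaging cannot converge in mean square:
for every `n ≥ 1`, `E[(u_n − u†)²] ≥ γ² K²`. -/
theorem scalar_3dvar_no_convergence
    {Ω : Type*} [MeasurableSpace Ω] (μ : Measure Ω) [IsProbabilityMeasure μ]
    (A Sg α γ udag u0 : ℝ) (hA : A ≠ 0) (hSg : 0 < Sg) (hα : 0 < α) (hγ : 0 < γ)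
    (η : ℕ → Ω → ℝ) (hmeas : ∀ n, Measurable (η n))
    (hindep : iIndepFun η μ)
    (hgauss : ∀ n, 1 ≤ n → Measure.map (η n) μ = gaussianReal 0 (Real.toNNReal (γ ^ 2)))
    (y : ℕ → Ω → ℝ) (hy : ∀ n, 1 ≤ n → y n = fun ω => A * udag + η n ω)
    (K : ℝ) (hK : K = A * Sg / (A ^ 2 * Sg + α))
    (u : ℕ → Ω → ℝ) (hu0 : u 0 = fun _ => u0)
    (hu : ∀ n : ℕ, u (n + 1) = fun ω => K * y (n + 1) ω + (1 - K * A) * u n ω) :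
    ∀ n : ℕ, 1 ≤ n → γ ^ 2 * K ^ 2 ≤ ∫ ω, (u n ω - udag) ^ 2 ∂μ :=
  scalar_3dvar_no_convergence_general μ A γ udag u0 η hmeas hindep hgauss y hy K u hu0 hu
end

section
/- Scalar bias bound for iterate-averaged 3DVAR: let A ≠ 0, Σ > 0, α > 0 be real, K = AΣ/(A²Σ + α), and v₀ ∈ ℝ. Then for every τ_b ∈ [0,1] and every n ≥ 1, the averaged bias term Ī_n^{bias} = (1/n) Σ_{k=1}^{n} (1 − K A)^k v₀ satisfies |Ī_n^{bias}|² ≤ (A²Σ)^{−2τ_b} (n/α)^{−2τ_b} v₀². -/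
/-!
Since `1 - K A = r := α / (α + A²Σ)`, the geometric sum turns the averaged bias into
`(α / n) q_{n,α}(A²Σ) v₀`. The factor `(α / n) q_{n,α}(λ)` is at most `1` by Bernoulli's
inequality `1 - rⁿ ≤ n (1 - r)`, and at most `(λ n / α)⁻¹` because `rⁿ ≥ 0`; the interpolation
`min a b ≤ a ^ (1 - τ) * b ^ τ` between these two bounds gives the claim after squaring.
-/

open Finset

/-- `q_{n,α}(λ) = λ⁻¹ (1 − (α/(α+λ))^n)`. -/
noncomputable def qFun (n : ℕ) (α l : ℝ) : ℝ := l⁻¹ * (1 - (α / (α + l)) ^ n)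

theorem le_rpow_mul_rpow_of_le_of_le {x a b τ : ℝ} (hx : 0 ≤ x) (ha : x ≤ a) (hb : x ≤ b)
    (hτ0 : 0 ≤ τ) (hτ1 : τ ≤ 1) : x ≤ a ^ (1 - τ) * b ^ τ :=
  calc x = x ^ (1 - τ) * x ^ τ := by
        rw [← Real.rpow_add' hx (by simp), sub_add_cancel, Real.rpow_one]
    _ ≤ a ^ (1 - τ) * b ^ τ :=
        mul_le_mul (Real.rpow_le_rpow hx ha (by linarith)) (Real.rpow_le_rpow hx hb hτ0)
          (by positivity) (Real.rpow_nonneg (hx.trans ha) _)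

theorem sum_Icc_pow_eq_mul_qFun {α l : ℝ} (hl : l ≠ 0) (hαl : α + l ≠ 0) (n : ℕ) :
    ∑ k ∈ Icc 1 n, (α / (α + l)) ^ k = α * qFun n α l := by
  set r := α / (α + l)
  have hgeom := geom_sum_Ico_mul r (Nat.le_add_left 1 n)
  rw [Ico_add_one_right_eq_Icc] at hgeom
  have hr : r * (α + l) = α := div_mul_cancel₀ α hαl
  unfold qFun
  field_simp
  linear_combination (-(α + l)) * hgeom + (∑ k ∈ Icc 1 n, r ^ k - r ^ n + 1) * hr

theorem qFun_nonneg {α l : ℝ} (hα : 0 ≤ α) (hl : 0 < l) (n : ℕ) : 0 ≤ qFun n α l := by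
  have hr : α / (α + l) ≤ 1 := div_le_one_of_le₀ (by linarith) (by linarith)
  exact mul_nonneg (inv_nonneg.2 hl.le) (sub_nonneg.2 (pow_le_one₀ (by positivity) hr))

theorem qFun_le_inv {α l : ℝ} (hα : 0 ≤ α) (hl : 0 < l) (n : ℕ) : qFun n α l ≤ l⁻¹ := by
  have : 0 ≤ (α / (α + l)) ^ n := by positivity
  exact mul_le_of_le_one_right (inv_nonneg.2 hl.le) (by linarith)

theorem qFun_le_div {α l : ℝ} (hα : 0 < α) (hl : 0 < l) (n : ℕ) : qFun n α l ≤ n / α := by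
  have hr : α / (α + l) = 1 + -(l / (α + l)) := by field_simp; ring
  have hbernoulli := one_add_mul_le_pow (a := -(l / (α + l))) (by
    have : l / (α + l) ≤ 1 := div_le_one_of_le₀ (by linarith) (by linarith)
    linarith) n
  rw [← hr] at hbernoulli
  unfold qFun
  rw [inv_mul_le_iff₀ hl]
  calc 1 - (α / (α + l)) ^ n ≤ n * (l / (α + l)) := by linarith
    _ ≤ n * (l / α) := by gcongr; linarith
    _ = l * (n / α) := by ring

theorem div_mul_qFun_le_rpow {α l τ : ℝ} (hα : 0 < α) (hl : 0 < l) {n : ℕ} (hn : 0 < n)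
    (hτ0 : 0 ≤ τ) (hτ1 : τ ≤ 1) : α / n * qFun n α l ≤ (l * (n / α)) ^ (-τ) := by
  have hn' : (0 : ℝ) < n := by exact_mod_cast hn
  have hq := qFun_nonneg hα.le hl n
  have hle_one : α / n * qFun n α l ≤ 1 :=
    calc α / n * qFun n α l ≤ α / n * (n / α) := by gcongr; exact qFun_le_div hα hl n
      _ = 1 := by field_simp
  have hle_inv : α / n * qFun n α l ≤ (l * (n / α))⁻¹ :=
    calc α / n * qFun n α l ≤ α / n * l⁻¹ := by gcongr; exact qFun_le_inv hα.le hl n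
      _ = (l * (n / α))⁻¹ := by field_simp
  have := le_rpow_mul_rpow_of_le_of_le (by positivity) hle_one hle_inv hτ0 hτ1
  rwa [Real.one_rpow, one_mul, Real.inv_rpow (by positivity), ← Real.rpow_neg (by positivity)]
    at this

/-- Scalar bias bound for iterate-averaged 3DVAR:
`|Ī_n^{bias}|² ≤ (A²Σ)^{−2τ_b} (n/α)^{−2τ_b} v₀²` for all `τ_b ∈ [0,1]`, `n ≥ 1`. -/
theorem scalar_3dvar_averaged_bias_bound
    (A Sg α v0 : ℝ) (hA : A ≠ 0) (hSg : 0 < Sg) (hα : 0 < α)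
    (K : ℝ) (hK : K = A * Sg / (A ^ 2 * Sg + α)) :
    ∀ τb : ℝ, τb ∈ Set.Icc (0:ℝ) 1 → ∀ n : ℕ, 1 ≤ n →
      ((1 / (n : ℝ)) * ∑ k ∈ Icc 1 n, (1 - K * A) ^ k * v0) ^ 2 ≤
        (A ^ 2 * Sg) ^ (-(2 * τb)) * ((n : ℝ) / α) ^ (-(2 * τb)) * v0 ^ 2 := by
  rintro τb ⟨hτ0, hτ1⟩ n hn
  set l := A ^ 2 * Sg
  have hl : 0 < l := by positivity
  have hr : 1 - K * A = α / (α + l) := by rw [hK]; field_simp; ring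
  calc ((1 / (n : ℝ)) * ∑ k ∈ Icc 1 n, (1 - K * A) ^ k * v0) ^ 2
        = (α / n * qFun n α l) ^ 2 * v0 ^ 2 := by
        rw [← sum_mul, hr, sum_Icc_pow_eq_mul_qFun hl.ne' (by positivity)]; ring
    _ ≤ ((l * (n / α)) ^ (-τb)) ^ 2 * v0 ^ 2 := by
        gcongr
        · exact mul_nonneg (by positivity) (qFun_nonneg hα.le hl n)
        · exact div_mul_qFun_le_rpow hα hl hn hτ0 hτ1
    _ = l ^ (-(2 * τb)) * ((n : ℝ) / α) ^ (-(2 * τb)) * v0 ^ 2 := by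
        rw [← Real.rpow_natCast, ← Real.rpow_mul (by positivity),
          Real.mul_rpow hl.le (by positivity)]
        ring_nf
end

section
/- Exact bias and variance of the scalar Kalman filter mean: for the scalar Kalman filter with initial covariance C₀ = γ²Σ/α > 0, for every n ≥ 1 one has E[m_n] − u† = (1 + A²Σn/α)^{−1}(m₀ − u†) and Var(m_n) = (A + α/(AΣn))^{−2} γ²/n. -/
/-!
In information form the filter is linear: each step adds `A²/γ²` to the precision `C_n⁻¹`
and `A y_n/γ²` to `m_n/C_n`. Hence `m_n` is an affine function of `η_1 + ⋯ + η_n` with explicit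
coefficients, and its mean and variance follow from `E η_k = 0`, `Var η_k = γ²` and
independence.
-/

open MeasureTheory ProbabilityTheory Finset

section KalmanRecursion

variable {A γ : ℝ} {C K : ℕ → ℝ}

lemma one_sub_kalman_gain_mul {c : ℝ} (hden : A ^ 2 * c + γ ^ 2 ≠ 0) :
    1 - c * A / (A ^ 2 * c + γ ^ 2) * A = γ ^ 2 / (A ^ 2 * c + γ ^ 2) := by
  rw [div_mul_eq_mul_div, one_sub_div hden]
  ring

lemma kalman_cov_pos (hγ : γ ≠ 0) (hC0 : 0 < C 0)
    (hK : ∀ n, K (n + 1) = C n * A / (A ^ 2 * C n + γ ^ 2))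
    (hC : ∀ n, C (n + 1) = (1 - K (n + 1) * A) * C n) (n : ℕ) : 0 < C n := by
  induction n with
  | zero => exact hC0
  | succ n ih =>
    have hden : 0 < A ^ 2 * C n + γ ^ 2 := by positivity
    rw [hC, hK, one_sub_kalman_gain_mul hden.ne']
    positivity

lemma kalman_gain_eq_cov_mul_div (hγ : γ ≠ 0) (hC0 : 0 < C 0)
    (hK : ∀ n, K (n + 1) = C n * A / (A ^ 2 * C n + γ ^ 2))
    (hC : ∀ n, C (n + 1) = (1 - K (n + 1) * A) * C n) (n : ℕ) :
    K (n + 1) = C (n + 1) * A / γ ^ 2 := by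
  have hden : 0 < A ^ 2 * C n + γ ^ 2 := by
    have := kalman_cov_pos hγ hC0 hK hC n; positivity
  rw [hC, hK, one_sub_kalman_gain_mul hden.ne']
  field_simp

lemma kalman_inv_cov_succ (hγ : γ ≠ 0) (hC0 : 0 < C 0)
    (hK : ∀ n, K (n + 1) = C n * A / (A ^ 2 * C n + γ ^ 2))
    (hC : ∀ n, C (n + 1) = (1 - K (n + 1) * A) * C n) (n : ℕ) :
    (C (n + 1))⁻¹ = (C n)⁻¹ + A ^ 2 / γ ^ 2 := by
  have hCn := kalman_cov_pos hγ hC0 hK hC n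
  have hden : 0 < A ^ 2 * C n + γ ^ 2 := by positivity
  rw [hC, hK, one_sub_kalman_gain_mul hden.ne']
  field_simp
  ring

lemma kalman_inv_cov_eq (hγ : γ ≠ 0) (hC0 : 0 < C 0)
    (hK : ∀ n, K (n + 1) = C n * A / (A ^ 2 * C n + γ ^ 2))
    (hC : ∀ n, C (n + 1) = (1 - K (n + 1) * A) * C n) (n : ℕ) :
    (C n)⁻¹ = (C 0)⁻¹ + n * (A ^ 2 / γ ^ 2) := by
  induction n with
  | zero => simp
  | succ n ih => rw [kalman_inv_cov_succ hγ hC0 hK hC, ih]; push_cast; ring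

lemma kalman_mean_div_cov_eq (hγ : γ ≠ 0) (hC0 : 0 < C 0)
    (hK : ∀ n, K (n + 1) = C n * A / (A ^ 2 * C n + γ ^ 2))
    (hC : ∀ n, C (n + 1) = (1 - K (n + 1) * A) * C n) {m y : ℕ → ℝ}
    (hm : ∀ n, m (n + 1) = K (n + 1) * y (n + 1) + (1 - K (n + 1) * A) * m n) (n : ℕ) :
    m n / C n = m 0 / C 0 + A / γ ^ 2 * ∑ k ∈ Icc 1 n, y k := by
  induction n with
  | zero => simp
  | succ n ih =>
    have hCn := (kalman_cov_pos hγ hC0 hK hC n).ne'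
    have hCn1 := (kalman_cov_pos hγ hC0 hK hC (n + 1)).ne'
    have hfrac : 1 - K (n + 1) * A = C (n + 1) / C n := by
      rw [eq_div_iff hCn, ← hC]
    rw [sum_Icc_succ_top (by omega), hm, hfrac, kalman_gain_eq_cov_mul_div hγ hC0 hK hC, mul_add,
      ← add_assoc, ← ih]
    field_simp
    ring

lemma kalman_mean_eq (hγ : γ ≠ 0) (hC0 : 0 < C 0)
    (hK : ∀ n, K (n + 1) = C n * A / (A ^ 2 * C n + γ ^ 2))
    (hC : ∀ n, C (n + 1) = (1 - K (n + 1) * A) * C n) {m y e : ℕ → ℝ} {u : ℝ}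
    (hm : ∀ n, m (n + 1) = K (n + 1) * y (n + 1) + (1 - K (n + 1) * A) * m n)
    (hy : ∀ k, 1 ≤ k → y k = A * u + e k) (n : ℕ) :
    m n = C n * (m 0 / C 0 + n * (A ^ 2 / γ ^ 2) * u) + C n * A / γ ^ 2 * ∑ k ∈ Icc 1 n, e k := by
  have hy_sum : ∑ k ∈ Icc 1 n, y k = n * (A * u) + ∑ k ∈ Icc 1 n, e k := by
    rw [sum_congr rfl fun k hk => hy k (mem_Icc.1 hk).1, sum_add_distrib, sum_const,
      Nat.card_Icc, add_tsub_cancel_right, nsmul_eq_mul]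
  have hmC := kalman_mean_div_cov_eq hγ hC0 hK hC hm n
  rw [hy_sum, div_eq_iff (kalman_cov_pos hγ hC0 hK hC n).ne'] at hmC
  rw [hmC]
  ring

end KalmanRecursion

section AffineSums

variable {Ω ι : Type*} [MeasurableSpace Ω] {μ : Measure Ω} [IsProbabilityMeasure μ]
  {X : ι → Ω → ℝ} {s : Finset ι}

lemma integral_const_add_mul_sum (hX : ∀ i ∈ s, Integrable (X i) μ) (a c : ℝ) :
    ∫ ω, a + c * ∑ i ∈ s, X i ω ∂μ = a + c * ∑ i ∈ s, ∫ ω, X i ω ∂μ := by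
  rw [integral_add (integrable_const a) ((integrable_finsetSum s hX).const_mul c),
    integral_const_mul, integral_finsetSum s hX]
  simp

lemma variance_const_add_mul_sum (hX : ∀ i ∈ s, MemLp (X i) 2 μ)
    (hindep : Set.Pairwise ↑s fun i j => X i ⟂ᵢ[μ] X j) (a c : ℝ) :
    Var[fun ω => a + c * ∑ i ∈ s, X i ω; μ] = c ^ 2 * ∑ i ∈ s, Var[X i; μ] := by
  have hsum : MemLp (∑ i ∈ s, X i) 2 μ := memLp_finsetSum' s hX
  rw [show (fun ω => a + c * ∑ i ∈ s, X i ω) = fun ω => a + c * (∑ i ∈ s, X i) ω by simp,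
    variance_const_add (hsum.const_mul c).aestronglyMeasurable, variance_const_mul,
    IndepFun.variance_sum hX hindep]

end AffineSums

theorem scalar_kalman_exact_bias_variance_general
    {Ω : Type*} [MeasurableSpace Ω] (μ : Measure Ω) [IsProbabilityMeasure μ]
    (A Sg α γ udag m0 : ℝ) (hSg : 0 < Sg) (hα : 0 < α) (hγ : 0 < γ)
    (η : ℕ → Ω → ℝ)
    (hindep : iIndepFun η μ)
    (hgauss : ∀ n, 1 ≤ n → Measure.map (η n) μ = gaussianReal 0 (Real.toNNReal (γ ^ 2)))
    (y : ℕ → Ω → ℝ) (hy : ∀ n, 1 ≤ n → y n = fun ω => A * udag + η n ω)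
    (C K : ℕ → ℝ) (m : ℕ → Ω → ℝ)
    (hC0 : C 0 = γ ^ 2 * Sg / α) (hm0 : m 0 = fun _ => m0)
    (hK : ∀ n : ℕ, K (n + 1) = C n * A / (A ^ 2 * C n + γ ^ 2))
    (hm : ∀ n : ℕ, m (n + 1) =
      fun ω => K (n + 1) * y (n + 1) ω + (1 - K (n + 1) * A) * m n ω)
    (hC : ∀ n : ℕ, C (n + 1) = (1 - K (n + 1) * A) * C n) :
    ∀ n : ℕ, 1 ≤ n →
      (∫ ω, m n ω ∂μ) - udag = (1 + A ^ 2 * Sg * (n : ℝ) / α)⁻¹ * (m0 - udag) ∧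
        variance (m n) μ = ((A + α / (A * Sg * (n : ℝ)))⁻¹) ^ 2 * (γ ^ 2 / (n : ℝ)) := by
  intro n _
  have hC0_pos : 0 < C 0 := by rw [hC0]; positivity
  have hCn : C n = γ ^ 2 * Sg / (α + A ^ 2 * Sg * n) := by
    rw [← inv_inv (C n), kalman_inv_cov_eq hγ.ne' hC0_pos hK hC, hC0]
    field_simp
  have hlaw : ∀ k ∈ Icc 1 n, HasLaw (η k) (gaussianReal 0 (γ ^ 2).toNNReal) μ := by
    intro k hk
    have hmap := hgauss k (mem_Icc.1 hk).1
    -- a map that is not a.e.-measurable pushes `μ` forward to `0`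
    exact ⟨.of_map_ne_zero (hmap ▸ IsProbabilityMeasure.ne_zero _), hmap⟩
  have hm_affine : m n = fun ω => C n * (m0 / C 0 + n * (A ^ 2 / γ ^ 2) * udag)
      + C n * A / γ ^ 2 * ∑ k ∈ Icc 1 n, η k ω := funext fun ω => by
    simpa [hm0] using kalman_mean_eq hγ.ne' hC0_pos hK hC (m := fun k => m k ω)
      (fun k => congrFun (hm k) ω) (fun k hk => congrFun (hy k hk) ω) n
  have hmean : ∀ k ∈ Icc 1 n, ∫ ω, η k ω ∂μ = 0 := fun k hk => by
    rw [(hlaw k hk).integral_eq, integral_id_gaussianReal]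
  have hvar : ∀ k ∈ Icc 1 n, Var[η k; μ] = γ ^ 2 := fun k hk => by
    rw [(hlaw k hk).variance_eq, variance_id_gaussianReal, Real.coe_toNNReal _ (sq_nonneg γ)]
  have hL2 : ∀ k ∈ Icc 1 n, MemLp (η k) 2 μ := fun k hk =>
    (hlaw k hk).hasGaussianLaw.memLp_two
  rw [hm_affine, integral_const_add_mul_sum (fun k hk => (hL2 k hk).integrable one_le_two),
    variance_const_add_mul_sum hL2 (fun i _ j _ hij => hindep.indepFun hij),
    sum_congr rfl hmean, sum_congr rfl hvar, hCn, hC0]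
  simp only [sum_const_zero, mul_zero, add_zero, sum_const, Nat.card_Icc, add_tsub_cancel_right,
    nsmul_eq_mul]
  constructor
  · field_simp
    ring
  · field_simp
    ring

/-- Exact bias and variance of the scalar Kalman filter mean: for every `n ≥ 1`,
`E[m_n] − u† = (1 + A²Σn/α)⁻¹ (m₀ − u†)` and
`Var(m_n) = (A + α/(AΣn))⁻² γ²/n`. -/
theorem scalar_kalman_exact_bias_variance
    {Ω : Type*} [MeasurableSpace Ω] (μ : Measure Ω) [IsProbabilityMeasure μ]
    (A Sg α γ udag m0 : ℝ) (hA : A ≠ 0) (hSg : 0 < Sg) (hα : 0 < α) (hγ : 0 < γ)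
    (η : ℕ → Ω → ℝ) (hmeas : ∀ n, Measurable (η n))
    (hindep : iIndepFun η μ)
    (hgauss : ∀ n, 1 ≤ n → Measure.map (η n) μ = gaussianReal 0 (Real.toNNReal (γ ^ 2)))
    (y : ℕ → Ω → ℝ) (hy : ∀ n, 1 ≤ n → y n = fun ω => A * udag + η n ω)
    (C K : ℕ → ℝ) (m : ℕ → Ω → ℝ)
    (hC0 : C 0 = γ ^ 2 * Sg / α) (hm0 : m 0 = fun _ => m0)
    (hK : ∀ n : ℕ, K (n + 1) = C n * A / (A ^ 2 * C n + γ ^ 2))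
    (hm : ∀ n : ℕ, m (n + 1) =
      fun ω => K (n + 1) * y (n + 1) ω + (1 - K (n + 1) * A) * m n ω)
    (hC : ∀ n : ℕ, C (n + 1) = (1 - K (n + 1) * A) * C n) :
    ∀ n : ℕ, 1 ≤ n →
      (∫ ω, m n ω ∂μ) - udag = (1 + A ^ 2 * Sg * (n : ℝ) / α)⁻¹ * (m0 - udag) ∧
        variance (m n) μ = ((A + α / (A * Sg * (n : ℝ)))⁻¹) ^ 2 * (γ ^ 2 / (n : ℝ)) :=
  scalar_kalman_exact_bias_variance_general μ A Sg α γ udag m0 hSg hα hγ η hindep hgauss y hy C K m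
    hC0 hm0 hK hm hC
end

section
/- For every α > 0, Λ > 0, positive integer n, real p ≥ 0, and λ ∈ [0, Λ]: if 0 ≤ p ≤ n then λ^p r_{n,α}(λ) ≤ (αp/n)^p (with the convention 0⁰ = 1 when p = 0), and if p > n then λ^p r_{n,α}(λ) ≤ α^n Λ^{p−n}. -/
/-- `r_{n,α}(λ) = (α/(α+λ))^n`. -/
noncomputable def rFun (n : ℕ) (α l : ℝ) : ℝ := (α / (α + l)) ^ n

/-!
For `p ≤ n`, weighted AM-GM with weights `p/n` and `1 - p/n` applied to `n λ / p` and `α` gives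
`(n λ / p)^(p/n) α^(1 - p/n) ≤ λ + (1 - p/n) α ≤ α + λ`; raising to the power `n` and multiplying
by `(αp/n)^p` yields `λ^p α^n ≤ (αp/n)^p (α + λ)^n`.
For `p > n`, write `λ^p r_{n,α}(λ) = λ^(p-n) (λα/(α+λ))^n` and bound the factors by `Λ^(p-n)`
and `α^n`.
-/

namespace Real

theorem rpow_mul_rpow_sub_le_add_rpow {α x p N : ℝ} (hα : 0 ≤ α) (hx : 0 ≤ x) (hp : 0 < p)
    (hpN : p ≤ N) : (N * x / p) ^ p * α ^ (N - p) ≤ (α + x) ^ N := by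
  have hN : 0 < N := hp.trans_le hpN
  have ha : 0 ≤ N * x / p := by positivity
  have amgm := geom_mean_le_arith_mean2_weighted (div_nonneg hp.le hN.le)
    (div_nonneg (sub_nonneg.2 hpN) hN.le) ha hα (by field_simp; ring)
  have arith : p / N * (N * x / p) + (N - p) / N * α ≤ α + x := by
    have : (N - p) / N * α ≤ α := mul_le_of_le_one_left hα ((div_le_one hN).2 (by linarith))
    field_simp at this ⊢
    linarith
  calc (N * x / p) ^ p * α ^ (N - p)
      = ((N * x / p) ^ (p / N) * α ^ ((N - p) / N)) ^ N := by
        rw [mul_rpow (by positivity) (by positivity), ← rpow_mul ha, ← rpow_mul hα,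
          div_mul_cancel₀ _ hN.ne', div_mul_cancel₀ _ hN.ne']
    _ ≤ (α + x) ^ N := rpow_le_rpow (by positivity) (amgm.trans arith) hN.le

theorem rpow_mul_rpow_le_mul_div_rpow_mul_add_rpow {α x p N : ℝ} (hα : 0 ≤ α) (hx : 0 ≤ x)
    (hp : 0 ≤ p) (hpN : p ≤ N) : x ^ p * α ^ N ≤ (α * p / N) ^ p * (α + x) ^ N := by
  rcases hp.eq_or_lt with rfl | hp
  · simpa using rpow_le_rpow hα (le_add_of_nonneg_right hx) hpN
  have hN : 0 < N := hp.trans_le hpN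
  calc x ^ p * α ^ N = (α * p / N) ^ p * ((N * x / p) ^ p * α ^ (N - p)) := by
        rw [← mul_assoc, ← mul_rpow (by positivity) (by positivity),
          show α * p / N * (N * x / p) = x * α by field_simp, mul_rpow hx hα, mul_assoc,
          ← rpow_add' hα (by simpa using hN.ne'), add_sub_cancel]
    _ ≤ (α * p / N) ^ p * (α + x) ^ N := by
        gcongr
        exact rpow_mul_rpow_sub_le_add_rpow hα hx hp hpN

end Real

theorem pow_mul_rFun_le {α l : ℝ} (n : ℕ) (hα : 0 < α) (hl : 0 ≤ l) :
    l ^ n * rFun n α l ≤ α ^ n := by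
  rw [rFun, ← mul_pow]
  gcongr
  rw [← mul_div_assoc, div_le_iff₀ (by positivity)]
  nlinarith

theorem rFun_eq_rpow_div_rpow {α l : ℝ} (n : ℕ) :
    rFun n α l = α ^ (n : ℝ) / (α + l) ^ (n : ℝ) := by
  rw [rFun, div_pow, Real.rpow_natCast, Real.rpow_natCast]

theorem rFun_poly_bounds_general (α L : ℝ) (hα : 0 < α)
    (n : ℕ) (p : ℝ) (hp : 0 ≤ p)
    (l : ℝ) (hl : l ∈ Set.Icc (0:ℝ) L) :
    (p ≤ (n : ℝ) → l ^ p * rFun n α l ≤ (α * p / (n : ℝ)) ^ p) ∧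
      ((n : ℝ) < p → l ^ p * rFun n α l ≤ α ^ n * L ^ (p - (n : ℝ))) := by
  obtain ⟨hl0, hlL⟩ := hl
  refine ⟨fun hpn => ?_, fun hnp => ?_⟩
  · rw [rFun_eq_rpow_div_rpow, mul_div_assoc', div_le_iff₀ (by positivity)]
    exact Real.rpow_mul_rpow_le_mul_div_rpow_mul_add_rpow hα.le hl0 hp hpn
  · have hp0 : p - n + n ≠ 0 := by
      rw [sub_add_cancel]
      exact (n.cast_nonneg.trans_lt hnp).ne'
    calc l ^ p * rFun n α l = l ^ (p - n) * (l ^ n * rFun n α l) := by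
          rw [← mul_assoc, ← Real.rpow_add_natCast' hl0 hp0, sub_add_cancel]
      _ ≤ L ^ (p - n) * α ^ n :=
          mul_le_mul (Real.rpow_le_rpow hl0 hlL (by linarith)) (pow_mul_rFun_le n hα hl0)
            (mul_nonneg (by positivity) (pow_nonneg (div_nonneg hα.le (by linarith)) n))
            (Real.rpow_nonneg (hl0.trans hlL) _)
      _ = α ^ n * L ^ (p - n) := mul_comm _ _

/-- For `λ ∈ [0, Λ]` and real `p ≥ 0`:
if `p ≤ n` then `λ^p r_{n,α}(λ) ≤ (αp/n)^p`, and
if `p > n` then `λ^p r_{n,α}(λ) ≤ α^n Λ^{p−n}`. -/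
theorem rFun_poly_bounds (α L : ℝ) (hα : 0 < α) (hL : 0 < L)
    (n : ℕ) (hn : 1 ≤ n) (p : ℝ) (hp : 0 ≤ p)
    (l : ℝ) (hl : l ∈ Set.Icc (0:ℝ) L) :
    (p ≤ (n : ℝ) → l ^ p * rFun n α l ≤ (α * p / (n : ℝ)) ^ p) ∧
      ((n : ℝ) < p → l ^ p * rFun n α l ≤ α ^ n * L ^ (p - (n : ℝ))) :=
  rFun_poly_bounds_general α L hα n p hp l hl
end

section
/- Averaged error decomposition for scalar 3DVAR: fix real numbers A, K, u†, u₀ and an arbitrary real sequence (η_j)_{j≥1}; set y_n = A u† + η_n, u_n = K y_n + (1 − K A) u_{n−1}, v_n = u_n − u†, v̄_n = (1/n) Σ_{k=1}^n v_k, and η̄_m = (1/m) Σ_{j=1}^m η_j. Then for every n ≥ 1, v̄_n = Σ_{k=0}^{n−1} ((n−k)/n)(1 − K A)^k K η̄_{n−k} + (1/n) Σ_{k=0}^{n−1} (1 − K A)^{k+1} v₀. -/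
/-!
Summing the error recursion `v_k = K η_k + (1 - K A) v_{k-1}` over `k = 1, …, n + 1` expresses
the partial sum `T_{n+1}` of the errors through `T_n`, namely
`T_{n+1} = K (η_1 + ⋯ + η_{n+1}) + (1 - K A) (v_0 + T_n)`, and the decomposition of `T_n`
follows by induction on `n`. Dividing by `n`, the weight `(n - k) / n` in front of the average
`η̄_{n-k}` turns it back into the plain sum `η_1 + ⋯ + η_{n-k}`.
-/

open Finset

lemma sum_Icc_one_eq_sum_range {M : Type*} [AddCommMonoid M] (f : ℕ → M) (n : ℕ) :
    ∑ k ∈ Icc 1 n, f k = ∑ k ∈ range n, f (k + 1) := by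
  rw [← Ico_add_one_right_eq_Icc, sum_Ico_eq_sum_range, Nat.add_sub_cancel]
  simp only [add_comm 1]

theorem sum_Icc_eq_of_linear_recurrence {R : Type*} [CommSemiring R] (b : R) (c e : ℕ → R)
    (he : ∀ n, e (n + 1) = c (n + 1) + b * e n) (n : ℕ) :
    ∑ k ∈ Icc 1 n, e k =
      ∑ k ∈ range n, b ^ k * ∑ j ∈ Icc 1 (n - k), c j + ∑ k ∈ range n, b ^ (k + 1) * e 0 := by
  induction n with
  | zero => simp
  | succ n ih =>
    have step : ∑ k ∈ Icc 1 (n + 1), e k =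
        ∑ j ∈ Icc 1 (n + 1), c j + b * ∑ k ∈ range (n + 1), e k := by
      simp only [sum_Icc_one_eq_sum_range, he, sum_add_distrib, mul_sum]
    rw [step, sum_range_succ' e, ← sum_Icc_one_eq_sum_range, ih, sum_range_succ' _ n,
      sum_range_succ' (fun k => b ^ (k + 1) * e 0)]
    simp only [Nat.add_sub_add_right, Nat.sub_zero, pow_zero, pow_succ', mul_assoc, ← mul_sum]
    ring

/-- Averaged error decomposition for scalar 3DVAR:
`v̄_n = Σ_{k=0}^{n−1} ((n−k)/n)(1−KA)^k K η̄_{n−k} + (1/n) Σ_{k=0}^{n−1} (1−KA)^{k+1} v₀`. -/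
theorem scalar_3dvar_averaged_error_decomposition
    (A K udag u0 : ℝ) (η : ℕ → ℝ)
    (y : ℕ → ℝ) (hy : ∀ n, 1 ≤ n → y n = A * udag + η n)
    (u : ℕ → ℝ) (hu0 : u 0 = u0)
    (hu : ∀ n : ℕ, u (n + 1) = K * y (n + 1) + (1 - K * A) * u n) :
    ∀ n : ℕ, 1 ≤ n →
      (1 / (n : ℝ)) * ∑ k ∈ Icc 1 n, (u k - udag) =
        (∑ k ∈ range n, (((n - k : ℕ) : ℝ) / (n : ℝ)) * (1 - K * A) ^ k * K *
            ((1 / ((n - k : ℕ) : ℝ)) * ∑ j ∈ Icc 1 (n - k), η j)) +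
          (1 / (n : ℝ)) * ∑ k ∈ range n, (1 - K * A) ^ (k + 1) * (u0 - udag) := by
  intro n _
  have error_step (m : ℕ) :
      u (m + 1) - udag = K * η (m + 1) + (1 - K * A) * (u m - udag) := by
    rw [hu, hy (m + 1) m.succ_pos]
    ring
  have averaged_term : ∀ k ∈ range n,
      (((n - k : ℕ) : ℝ) / n) * (1 - K * A) ^ k * K *
          ((1 / ((n - k : ℕ) : ℝ)) * ∑ j ∈ Icc 1 (n - k), η j) =
        1 / n * ((1 - K * A) ^ k * ∑ j ∈ Icc 1 (n - k), K * η j) := by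
    intro k hk
    have : ((n - k : ℕ) : ℝ) ≠ 0 := Nat.cast_ne_zero.mpr (by simp at hk; omega)
    rw [← mul_sum]
    field_simp
  rw [sum_Icc_eq_of_linear_recurrence _ (fun j => K * η j) _ error_step, hu0,
    sum_congr rfl averaged_term, ← mul_sum, mul_add]
end
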